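/- For every α ∈ ℂ, the module V(α) = ℂ^N[t,t⁻¹]t^α is an irreducible 𝒟̂^N-module of the intermediate series: every graded component V(α)_j is one-dimensional, and V(α) has no proper nonzero 𝒟̂^N-submodule. -/

import Mathlib

/-! On the monomial basis `t^{k+α} ε_r` every operator `t^{a-j} [D]_j A` is a shift in `k`
times the scalar `[k+α]_j` times `A`, so the commutation relations come down to an identity
between falling factorials, the Chu–Vandermonde identity for descending Pochhammer symbols.
The grading is the one of the monomial basis, reindexed by `d ↦ (d / N, d % N)`.

For irreducibility, the Euler operator `D = t·d/dt` acts on `t^{k+α} ℂ^N` by the scalar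
`k + α`, and these scalars are pairwise distinct; applying Lagrange interpolation polynomials
in `D` to a nonzero vector of an invariant subspace isolates one nonzero component
`t^{k+α} w`, and the operators `t^i E_{p,r}` carry it to every basis vector. -/

noncomputable section

open scoped BigOperators

/-- Falling factorial `[b]_s = b(b-1)⋯(b-s+1)` of an integer `b`. -/
def dfall (b : ℤ) (s : ℕ) : ℤ := ∏ i ∈ Finset.range s, (b - (i : ℤ))

/-- Generalized binomial coefficient `binom(a, n)` as a complex number, for `a : ℤ`, `n : ℕ`. -/
def cbinom (a : ℤ) (n : ℕ) : ℂ :=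
  (∏ i ∈ Finset.range n, ((a : ℂ) - (i : ℂ))) / (n.factorial : ℂ)

/-- The coefficient `δ_{i,-k} (-1)^j j! l! binom(i+j, j+l+1)` of the central element in the
bracket of `t^a (d/dt)^j A = t^i [D]_j A` (with `a = i + j`) and `t^b (d/dt)^l B = t^k [D]_l B`
(with `b = k + l`); it is still to be multiplied by `tr (AB)`. -/
def cocycleCoeff (a : ℤ) (j : ℕ) (b : ℤ) (l : ℕ) : ℂ :=
  if a + b = (j : ℤ) + (l : ℤ) then
    (-1 : ℂ) ^ j * (j.factorial : ℂ) * (l.factorial : ℂ) * cbinom a (j + l + 1)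
  else 0

/-- A module over the universal central extension `𝒟̂^N` of the Lie algebra of `N × N`-matrix
differential operators on the circle, presented through the action `ρ a j A` of the basis
elements `t^a (d/dt)^j A = t^{a-j} [D]_j A` (`a ∈ ℤ`, `j ∈ ℕ`, `A ∈ gl_N(ℂ)`) together with the
action `cC` of the central element `C`, subject to bilinearity in `A` and the commutation
relations (2.3)/(3.12) of the paper. -/
structure DhatModule (N : ℕ) (V : Type*) [AddCommGroup V] [Module ℂ V] where
  ρ : ℤ → ℕ → Matrix (Fin N) (Fin N) ℂ → Module.End ℂ V
  cC : Module.End ℂ V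
  ρ_add : ∀ a j A B, ρ a j (A + B) = ρ a j A + ρ a j B
  ρ_smul : ∀ a j (c : ℂ) A, ρ a j (c • A) = c • ρ a j A
  cC_comm : ∀ a j A, cC * ρ a j A = ρ a j A * cC
  bracket_rel : ∀ (a : ℤ) (j : ℕ) (A : Matrix (Fin N) (Fin N) ℂ) (b : ℤ) (l : ℕ)
      (B : Matrix (Fin N) (Fin N) ℂ),
    ρ a j A * ρ b l B - ρ b l B * ρ a j A =
      ((∑ s ∈ Finset.range (j + 1),
        ((j.choose s : ℂ) * (dfall b s : ℂ)) • ρ (a + b - (s : ℤ)) (j + l - s) (A * B))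
      - (∑ s ∈ Finset.range (l + 1),
        ((l.choose s : ℂ) * (dfall a s : ℂ)) • ρ (a + b - (s : ℤ)) (j + l - s) (B * A)))
      + (cocycleCoeff a j b l * (A * B).trace) • cC

namespace DhatModule

variable {N : ℕ} {V : Type*} [AddCommGroup V] [Module ℂ V]

/-- A subspace invariant under the `𝒟̂^N`-action. -/
def IsSub (M : DhatModule N V) (U : Submodule ℂ V) : Prop :=
  (∀ a j A, ∀ v ∈ U, M.ρ a j A v ∈ U) ∧ ∀ v ∈ U, M.cC v ∈ U

/-- The module is trivial: `𝒟̂^N` acts by zero. -/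
def IsTrivial (M : DhatModule N V) : Prop :=
  (∀ a j A (v : V), M.ρ a j A v = 0) ∧ ∀ v : V, M.cC v = 0

/-- Irreducibility: the module is nonzero and has no invariant subspace besides `⊥` and `⊤`. -/
def IsIrreducible (M : DhatModule N V) : Prop :=
  (⊥ : Submodule ℂ V) ≠ ⊤ ∧ ∀ U : Submodule ℂ V, M.IsSub U → U = ⊥ ∨ U = ⊤

/-- Indecomposability: the module is nonzero and is not the direct sum of two nonzero
invariant subspaces. -/
def IsIndecomposable (M : DhatModule N V) : Prop :=
  (⊥ : Submodule ℂ V) ≠ ⊤ ∧ ∀ U W : Submodule ℂ V, M.IsSub U → M.IsSub W →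
    U ⊓ W = ⊥ → U ⊔ W = ⊤ → U = ⊥ ∨ W = ⊥

end DhatModule

/-- The degree of the basis element `t^a (d/dt)^j E_{p,q} = t^{a-j} [D]_j E_{p,q}` in the
principal `ℤ`-gradation of `𝒟̂^N`, namely `(a - j) N + p - q` (here `p, q ∈ Fin N` correspond
to `p+1, q+1 ∈ [1,N]`). -/
def gdeg (N : ℕ) (a : ℤ) (j : ℕ) (p q : Fin N) : ℤ :=
  (a - (j : ℤ)) * (N : ℤ) + (p.val : ℤ) - (q.val : ℤ)

/-- A `ℤ`-graded `𝒟̂^N`-module, graded compatibly with the principal gradation of `𝒟̂^N`. -/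
structure GradedDhatModule (N : ℕ) (V : Type*) [AddCommGroup V] [Module ℂ V]
    extends DhatModule N V where
  grade : ℤ → Submodule ℂ V
  isInternal : DirectSum.IsInternal grade
  grade_ρ : ∀ (a : ℤ) (j : ℕ) (p q : Fin N) (d : ℤ), ∀ v ∈ grade d,
    ρ a j (Matrix.single p q 1) v ∈ grade (d + gdeg N a j p q)
  grade_cC : ∀ (d : ℤ), ∀ v ∈ grade d, cC v ∈ grade d

namespace GradedDhatModule

variable {N : ℕ} {V : Type*} [AddCommGroup V] [Module ℂ V]

/-- Quasifiniteness: every graded component is finite-dimensional. -/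
def IsQuasifinite (G : GradedDhatModule N V) : Prop :=
  ∀ d : ℤ, FiniteDimensional ℂ (G.grade d)

/-- Uniformly bounded: the dimensions of the graded components are uniformly bounded. -/
def IsUniformlyBounded (G : GradedDhatModule N V) : Prop :=
  ∃ K : ℕ, ∀ d : ℤ, Module.rank ℂ (G.grade d) ≤ (K : Cardinal)

/-- Module of the intermediate series: all graded components have dimension at most `1`. -/
def IsIntermediateSeries (G : GradedDhatModule N V) : Prop :=
  ∀ d : ℤ, Module.rank ℂ (G.grade d) ≤ 1

/-- A highest weight vector: homogeneous, nonzero, with `(𝒟̂^N)₀ v ⊆ ℂ v` and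
`(𝒟̂^N)₊ v = 0`. -/
def IsHWVector (G : GradedDhatModule N V) (v : V) : Prop :=
  v ≠ 0 ∧ (∃ d : ℤ, v ∈ G.grade d) ∧
  (∀ (a : ℤ) (j : ℕ) (p q : Fin N), gdeg N a j p q = 0 →
    ∃ c : ℂ, G.ρ a j (Matrix.single p q 1) v = c • v) ∧
  (∃ c : ℂ, G.cC v = c • v) ∧
  (∀ (a : ℤ) (j : ℕ) (p q : Fin N), 0 < gdeg N a j p q →
    G.ρ a j (Matrix.single p q 1) v = 0)

/-- A lowest weight vector: homogeneous, nonzero, with `(𝒟̂^N)₀ v ⊆ ℂ v` and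
`(𝒟̂^N)₋ v = 0`. -/
def IsLWVector (G : GradedDhatModule N V) (v : V) : Prop :=
  v ≠ 0 ∧ (∃ d : ℤ, v ∈ G.grade d) ∧
  (∀ (a : ℤ) (j : ℕ) (p q : Fin N), gdeg N a j p q = 0 →
    ∃ c : ℂ, G.ρ a j (Matrix.single p q 1) v = c • v) ∧
  (∃ c : ℂ, G.cC v = c • v) ∧
  (∀ (a : ℤ) (j : ℕ) (p q : Fin N), gdeg N a j p q < 0 →
    G.ρ a j (Matrix.single p q 1) v = 0)

/-- A highest weight module: generated by a highest weight vector. -/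
def IsHWModule (G : GradedDhatModule N V) : Prop :=
  ∃ v : V, G.IsHWVector v ∧
    ∀ U : Submodule ℂ V, G.toDhatModule.IsSub U → v ∈ U → U = ⊤

/-- A lowest weight module: generated by a lowest weight vector. -/
def IsLWModule (G : GradedDhatModule N V) : Prop :=
  ∃ v : V, G.IsLWVector v ∧
    ∀ U : Submodule ℂ V, G.toDhatModule.IsSub U → v ∈ U → U = ⊤

end GradedDhatModule

/-- Falling factorial `[x]_j = x(x-1)⋯(x-j+1)` in `ℂ`. -/
def cfall (x : ℂ) (j : ℕ) : ℂ := ∏ s ∈ Finset.range j, (x - (s : ℂ))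

/-- The underlying space `ℂ^N[t,t⁻¹] t^α` of the modules `V(α)` and `V̄(α)`; the coefficient
of `t^{k+α}` is stored at index `k`. -/
abbrev LTP (N : ℕ) : Type := ℤ →₀ (Fin N → ℂ)

/-- The action of `t^a (d/dt)^j A = t^{a-j} [D]_j A` on `V(α)`:
`t^{a-j} [D]_j A ⬝ (t^{k+α} v) = [k+α]_j t^{k+a-j+α} (A v)`. -/
def VAct (N : ℕ) (α : ℂ) (a : ℤ) (j : ℕ) (A : Matrix (Fin N) (Fin N) ℂ) :
    Module.End ℂ (LTP N) :=
  Finsupp.lsum ℂ fun k : ℤ =>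
    (Finsupp.lsingle (k + a - (j : ℤ))) ∘ₗ (cfall ((k : ℂ) + α) j • A.mulVecLin)

/-- The action of `t^a (d/dt)^j A = t^{a-j} [D]_j A` on the twisted module `V̄(α)`:
`t^i f(D) A ⬝ (t^{k+α} v) = -f(-(i+k+α)) t^{i+k+α} (Aᵀ v)` for `f(D) = [D]_j`. -/
def VbarAct (N : ℕ) (α : ℂ) (a : ℤ) (j : ℕ) (A : Matrix (Fin N) (Fin N) ℂ) :
    Module.End ℂ (LTP N) :=
  Finsupp.lsum ℂ fun k : ℤ =>
    (Finsupp.lsingle (k + a - (j : ℤ))) ∘ₗ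
      ((-(cfall (-(((k + a - (j : ℤ)) : ℂ) + α)) j)) • (A.transpose).mulVecLin)

/-- The graded component `V(α)_d = ℂ t^{k+α} ε_r`, where `d + 1 = kN + r` with `r ∈ [1,N]`
(equivalently `d = kN + r'` with `r' = r - 1 ∈ Fin N`). -/
def VGrade (N : ℕ) (d : ℤ) : Submodule ℂ (LTP N) :=
  Submodule.span ℂ {x : LTP N | ∃ (k : ℤ) (r : Fin N) (c : ℂ),
    d = k * (N : ℤ) + (r.val : ℤ) ∧ x = Finsupp.single k (Pi.single r c)}


open Finset
open scoped Matrix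

open Polynomial in
theorem cfall_eq_descPochhammer_smeval (x : ℂ) (j : ℕ) :
    cfall x j = (descPochhammer ℤ j).smeval x := by
  rw [← aeval_eq_smeval, aeval_def, ← eval_map, descPochhammer_map,
    descPochhammer_eval_eq_prod_range, cfall]

theorem cfall_add (x : ℂ) (m n : ℕ) : cfall x (m + n) = cfall x m * cfall (x - m) n := by
  simp only [cfall, prod_range_add, Nat.cast_add, sub_sub]

theorem cfall_vandermonde (x y : ℂ) (n : ℕ) :
    cfall (x + y) n = ∑ s ∈ range (n + 1), (n.choose s : ℂ) * cfall y s * cfall x (n - s) := by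
  simp only [cfall_eq_descPochhammer_smeval, add_comm x y, mul_assoc,
    Ring.descPochhammer_smeval_add n (Commute.all y x), Nat.sum_antidiagonal_eq_sum_range_succ_mk]

theorem cfall_shift_mul (x c : ℂ) (j l : ℕ) :
    cfall (x + c - l) j * cfall x l =
      ∑ s ∈ range (j + 1), (j.choose s : ℂ) * cfall c s * cfall x (j + l - s) := by
  rw [add_sub_right_comm, cfall_vandermonde, sum_mul]
  refine sum_congr rfl fun s hs => ?_
  rw [show j + l - s = l + (j - s) by have := mem_range.1 hs; omega, cfall_add]
  ring

theorem cast_dfall (b : ℤ) (s : ℕ) : (dfall b s : ℂ) = cfall b s := by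
  simp [dfall, cfall]

section VAct

variable {N : ℕ} (α : ℂ)

theorem VAct_single (a : ℤ) (j : ℕ) (A : Matrix (Fin N) (Fin N) ℂ) (k : ℤ) (v : Fin N → ℂ) :
    VAct N α a j A (Finsupp.single k v) =
      Finsupp.single (k + a - j) (cfall (k + α) j • A *ᵥ v) := by
  simp [VAct]

theorem VAct_add (a : ℤ) (j : ℕ) (A B : Matrix (Fin N) (Fin N) ℂ) :
    VAct N α a j (A + B) = VAct N α a j A + VAct N α a j B :=
  Finsupp.lhom_ext fun k v => by simp [VAct_single, Matrix.add_mulVec]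

theorem VAct_smul (a : ℤ) (j : ℕ) (c : ℂ) (A : Matrix (Fin N) (Fin N) ℂ) :
    VAct N α a j (c • A) = c • VAct N α a j A :=
  Finsupp.lhom_ext fun k v => by simp [VAct_single, Matrix.smul_mulVec, smul_smul, mul_comm]

theorem sum_smul_VAct_single (n : ℕ) (S : Finset ℕ) (hS : ∀ s ∈ S, s ≤ n) (c : ℕ → ℂ) (e : ℤ)
    (A : Matrix (Fin N) (Fin N) ℂ) (k : ℤ) (v : Fin N → ℂ) :
    (∑ s ∈ S, c s • VAct N α (e - s) (n - s) A) (Finsupp.single k v) =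
      Finsupp.single (k + e - n) ((∑ s ∈ S, c s * cfall (k + α) (n - s)) • A *ᵥ v) := by
  simp only [LinearMap.coe_sum, Finset.sum_apply, LinearMap.smul_apply, VAct_single,
    Finsupp.smul_single, smul_smul, sum_smul, Finsupp.single_finsetSum]
  refine sum_congr rfl fun s hs => ?_
  rw [Nat.cast_sub (hS s hs)]
  ring_nf

theorem VAct_bracket (a : ℤ) (j : ℕ) (A : Matrix (Fin N) (Fin N) ℂ)
    (b : ℤ) (l : ℕ) (B : Matrix (Fin N) (Fin N) ℂ) :
    VAct N α a j A * VAct N α b l B - VAct N α b l B * VAct N α a j A =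
      (∑ s ∈ range (j + 1),
        ((j.choose s : ℂ) * (dfall b s : ℂ)) • VAct N α (a + b - s) (j + l - s) (A * B))
      - (∑ s ∈ range (l + 1),
        ((l.choose s : ℂ) * (dfall a s : ℂ)) • VAct N α (a + b - s) (j + l - s) (B * A)) := by
  refine Finsupp.lhom_ext fun k v => ?_
  have hj : ∀ s ∈ range (j + 1), s ≤ j + l := fun s hs => by have := mem_range.1 hs; omega
  have hl : ∀ s ∈ range (l + 1), s ≤ j + l := fun s hs => by have := mem_range.1 hs; omega
  simp only [LinearMap.sub_apply, Module.End.mul_apply, sum_smul_VAct_single α _ _ hj,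
    sum_smul_VAct_single α _ _ hl, VAct_single, Matrix.mulVec_smul, smul_smul,
    Matrix.mulVec_mulVec, cast_dfall]
  have hAB : cfall (↑(k + b - l) + α) j * cfall (k + α) l =
      ∑ s ∈ range (j + 1), (j.choose s : ℂ) * cfall b s * cfall (k + α) (j + l - s) := by
    rw [← cfall_shift_mul]; push_cast; ring_nf
  have hBA : cfall (↑(k + a - j) + α) l * cfall (k + α) j =
      ∑ s ∈ range (l + 1), (l.choose s : ℂ) * cfall a s * cfall (k + α) (j + l - s) := by
    rw [add_comm j l, ← cfall_shift_mul]; push_cast; ring_nf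
  rw [hAB, hBA]
  congr 2 <;> push_cast <;> ring

end VAct

def VDhatModule (N : ℕ) (α : ℂ) : DhatModule N (LTP N) where
  ρ := VAct N α
  cC := 0
  ρ_add := VAct_add α
  ρ_smul := VAct_smul α
  cC_comm _ _ _ := by rw [zero_mul, mul_zero]
  bracket_rel a j A b l B := by rw [smul_zero, add_zero]; exact VAct_bracket α a j A b l B

section Grading

variable (N : ℕ)

def singleBasis : Module.Basis (Σ _ : ℤ, Fin N) ℂ (LTP N) :=
  Finsupp.basis fun _ => Pi.basisFun ℂ (Fin N)

theorem singleBasis_apply (k : ℤ) (r : Fin N) :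
    singleBasis N ⟨k, r⟩ = Finsupp.single k (Pi.single r 1) := by
  simp [singleBasis]

def homogeneousBasis [NeZero N] : Module.Basis ℤ ℂ (LTP N) :=
  (singleBasis N).reindex ((Equiv.sigmaEquivProd ℤ (Fin N)).trans (Int.divModEquiv N).symm)

theorem homogeneousBasis_apply [NeZero N] (k : ℤ) (r : Fin N) :
    homogeneousBasis N (k * N + r) = Finsupp.single k (Pi.single r 1) := by
  have : (Int.divModEquiv N).symm (k, r) = k * N + r := rfl
  rw [homogeneousBasis, Module.Basis.reindex_apply, ← this]
  simp only [Equiv.symm_trans_apply, Equiv.symm_symm, Equiv.apply_symm_apply,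
    Equiv.sigmaEquivProd_symm_apply, singleBasis_apply]

variable {N}

theorem single_mem_VGrade (k : ℤ) (r : Fin N) (c : ℂ) :
    Finsupp.single k (Pi.single r c) ∈ VGrade N (k * N + r) :=
  Submodule.subset_span ⟨k, r, c, rfl, rfl⟩

theorem VGrade_eq_span [NeZero N] (d : ℤ) : VGrade N d = ℂ ∙ homogeneousBasis N d := by
  obtain ⟨⟨k, r⟩, rfl⟩ := (Int.divModEquiv N).symm.surjective d
  simp only [Int.divModEquiv_symm_apply, homogeneousBasis_apply]
  refine le_antisymm (Submodule.span_le.2 ?_) ((Submodule.span_singleton_le_iff_mem _ _).2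
    (single_mem_VGrade k r 1))
  rintro _ ⟨k', r', c, hd, rfl⟩
  obtain ⟨rfl, rfl⟩ : k = k' ∧ r = r' := by
    simpa using (Int.divModEquiv N).symm.injective (a₁ := (k, r)) (a₂ := (k', r')) hd
  exact Submodule.mem_span_singleton.2
    ⟨c, by rw [Finsupp.smul_single, ← Pi.single_smul', smul_eq_mul, mul_one]⟩

theorem VGrade_isInternal [NeZero N] : DirectSum.IsInternal (VGrade N) := by
  rw [funext VGrade_eq_span]
  exact DirectSum.isInternal_submodule_of_iSupIndep_of_iSup_eq_top
    (homogeneousBasis N).linearIndependent.iSupIndep_span_singleton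
    (by rw [← Submodule.span_range_eq_iSup, (homogeneousBasis N).span_eq])

theorem rank_VGrade [NeZero N] (d : ℤ) : Module.rank ℂ (VGrade N d) = 1 := by
  rw [VGrade_eq_span, ← Module.finrank_eq_rank,
    finrank_span_singleton ((homogeneousBasis N).ne_zero d), Nat.cast_one]

theorem VAct_mem_VGrade (α : ℂ) (a : ℤ) (j : ℕ) (p q : Fin N) {d : ℤ} {v : LTP N}
    (hv : v ∈ VGrade N d) :
    VAct N α a j (Matrix.single p q 1) v ∈ VGrade N (d + gdeg N a j p q) := by
  refine Submodule.span_induction ?_ (by simp) (fun _ _ _ _ => by simpa using add_mem)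
    (fun _ _ _ => by simpa using Submodule.smul_mem _ _) hv
  rintro _ ⟨k, r, c, rfl, rfl⟩
  rw [VAct_single, Matrix.single_mulVec_eq]
  obtain rfl | hqr := eq_or_ne q r
  · have hdeg : k * N + q + gdeg N a j p q = (k + a - j) * N + p := by simp only [gdeg]; ring
    rw [hdeg, Pi.single_eq_same, one_mul, ← Pi.single_smul', ← Pi.single_smul',
      smul_eq_mul, smul_eq_mul, mul_one]
    exact single_mem_VGrade _ _ _
  · simp [hqr]

end Grading

open Polynomial in
theorem aeval_apply_mem_of_invariant {K M : Type*} [CommRing K] [AddCommGroup M] [Module K M]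
    {f : Module.End K M} {U : Submodule K M} (hU : ∀ x ∈ U, f x ∈ U) (p : K[X]) {x : M}
    (hx : x ∈ U) : aeval f p x ∈ U := by
  have hpow : ∀ n : ℕ, (f ^ n) x ∈ U := fun n => by
    induction n with
    | zero => simpa using hx
    | succ n ih => rw [pow_succ', Module.End.mul_apply]; exact hU _ ih
  rw [aeval_eq_sum_range, LinearMap.coe_sum, Finset.sum_apply]
  exact U.sum_mem fun i _ => U.smul_mem _ (hpow i)

theorem Finsupp.single_apply_mem_of_invariant {K ι W : Type*} [Field K] [AddCommGroup W]
    [Module K W] {f : Module.End K (ι →₀ W)} {μ : ι → K} (hμ : Function.Injective μ)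
    (hf : ∀ i v, f (Finsupp.single i v) = μ i • Finsupp.single i v)
    {U : Submodule K (ι →₀ W)} (hU : ∀ x ∈ U, f x ∈ U) {w : ι →₀ W} (hw : w ∈ U) (i : ι) :
    Finsupp.single i (w i) ∈ U := by
  classical
  let S := insert i w.support
  have hproj : Polynomial.aeval f (Lagrange.basis S μ i) w = Finsupp.single i (w i) := by
    conv_lhs => rw [← w.sum_single]
    rw [map_finsuppSum, Finsupp.sum, Finset.sum_eq_single i]
    · rw [Module.End.aeval_apply_of_mem_apply_eq_smul (hf i _),
        Lagrange.eval_basis_self hμ.injOn (Finset.mem_insert_self i _), one_smul]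
    · intro j hj hji
      rw [Module.End.aeval_apply_of_mem_apply_eq_smul (hf j _),
        Lagrange.eval_basis_of_ne hji.symm (Finset.mem_insert_of_mem hj), zero_smul]
    · intro hi
      rw [Finsupp.notMem_support_iff.1 hi, Finsupp.single_zero, map_zero]
  exact hproj ▸ aeval_apply_mem_of_invariant hU _ hw

theorem VAct_euler_single {N : ℕ} (α : ℂ) (k : ℤ) (v : Fin N → ℂ) :
    VAct N α 1 1 1 (Finsupp.single k v) = ((k : ℂ) + α) • Finsupp.single k v := by
  simp [VAct_single, cfall, Finsupp.smul_single]

theorem eq_bot_or_eq_top_of_VAct_invariant {N : ℕ} (α : ℂ) {U : Submodule ℂ (LTP N)}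
    (hU : ∀ (a : ℤ) (j : ℕ) (A : Matrix (Fin N) (Fin N) ℂ), ∀ v ∈ U, VAct N α a j A v ∈ U) :
    U = ⊥ ∨ U = ⊤ := by
  refine or_iff_not_imp_left.2 fun hU0 => ?_
  obtain ⟨u, huU, hu0⟩ := Submodule.exists_mem_ne_zero_of_ne_bot hU0
  obtain ⟨k, hk⟩ := Finsupp.ne_iff.1 hu0
  obtain ⟨r, hr⟩ := Function.ne_iff.1 hk
  have hk_mem : Finsupp.single k (u k) ∈ U :=
    Finsupp.single_apply_mem_of_invariant (μ := fun k : ℤ => (k : ℂ) + α)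
      (fun _ _ h => by simpa using h) (VAct_euler_single α) (hU 1 1 1) huU k
  have hbasis (m : ℤ) (p : Fin N) : Finsupp.single m (Pi.single p 1) ∈ U := by
    have := U.smul_mem (u k r)⁻¹ (hU (m - k) 0 (Matrix.single p r 1) _ hk_mem)
    simpa [VAct_single, Matrix.single_mulVec_eq, cfall, Finsupp.smul_single, smul_smul,
      inv_mul_cancel₀ hr] using this
  rw [eq_top_iff, ← (singleBasis N).span_eq, Submodule.span_le]
  rintro _ ⟨⟨m, p⟩, rfl⟩
  rw [singleBasis_apply]
  exact hbasis m p

/-- For every `α ∈ ℂ`, `V(α) = ℂ^N[t,t⁻¹]t^α` is an irreducible `𝒟̂^N`-module of the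
intermediate series: it is a `𝒟̂^N`-module (with `C` acting as `0`) graded by the
one-dimensional components `V(α)_d`, and it has no invariant subspace besides `⊥` and `⊤`. -/
theorem Valpha_irreducible_intermediate (N : ℕ) (hN : 1 ≤ N) (α : ℂ) :
    (∃ M : GradedDhatModule N (LTP N),
        M.ρ = VAct N α ∧ M.cC = 0 ∧ M.grade = VGrade N) ∧
    (∀ d : ℤ, Module.rank ℂ (VGrade N d) = 1) ∧
    ((⊥ : Submodule ℂ (LTP N)) ≠ ⊤ ∧
      ∀ U : Submodule ℂ (LTP N),
        (∀ (a : ℤ) (j : ℕ) (A : Matrix (Fin N) (Fin N) ℂ), ∀ v ∈ U, VAct N α a j A v ∈ U) →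
        U = ⊥ ∨ U = ⊤) := by
  have : NeZero N := ⟨by omega⟩
  refine ⟨⟨{ VDhatModule N α with
      grade := VGrade N
      isInternal := VGrade_isInternal
      grade_ρ := fun a j p q _ _ hv => VAct_mem_VGrade α a j p q hv
      grade_cC := fun _ _ _ => zero_mem _ }, rfl, rfl, rfl⟩,
    rank_VGrade, bot_ne_top, fun _ => eq_bot_or_eq_top_of_VAct_invariant α⟩
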